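/- For every integer n ≥ 1, the number of Catalan words of length n avoiding the vincular pattern 11-1 equals the number of Catalan words of length n avoiding the vincular pattern 1-11. Moreover, for every m ≥ 1 the number of Catalan words of length n avoiding 11-1 with largest letter m equals the number avoiding 1-11 with largest letter m, and for every a ≥ 1 the number of Catalan words of length n avoiding 11-1 with last letter a equals the number avoiding 1-11 with last letter a. -/

import Mathlib

/-!
A word avoids 11-1 exactly when every square `a a` in it sits at the last occurrence of `a`,
and avoids 1-11 exactly when every square sits at the first occurrence of `a`. In both cases
the word is recovered from its reduction (adjacent repeats collapsed) and its set of squared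
letters, so moving each square from the last to the first occurrence of its letter is a
bijection between the two classes. The move keeps the length, the letters, the first and last
letter and every reflexive relation between adjacent letters; in particular it keeps the
Catalan property and the largest and the last letter.
-/

/-- A Catalan word: a word of positive integers starting with 1 in which each
letter exceeds its predecessor by at most 1. -/
def IsCatalanWord {n : ℕ} (w : Fin n → ℕ) : Prop :=
  (∀ i, 1 ≤ w i) ∧ (∀ h : 0 < n, w ⟨0, h⟩ = 1) ∧
  ∀ i : ℕ, ∀ h : i + 1 < n, w ⟨i + 1, h⟩ ≤ w ⟨i, by omega⟩ + 1

/-- `w` contains the vincular pattern 1-11: there are indices `i < j` with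
`w i = w j = w (j+1)`. -/
def Contains1_11 {n : ℕ} (w : Fin n → ℕ) : Prop :=
  ∃ i j : ℕ, ∃ hj : j + 1 < n, ∃ hij : i < j,
    w ⟨i, by omega⟩ = w ⟨j, by omega⟩ ∧ w ⟨j, by omega⟩ = w ⟨j + 1, hj⟩

/-- `w` contains the vincular pattern 11-1: there are indices `i` and `k` with
`i + 1 < k` and `w i = w (i+1) = w k`. -/
def Contains11_1 {n : ℕ} (w : Fin n → ℕ) : Prop :=
  ∃ i k : ℕ, ∃ hk : k < n, ∃ hik : i + 1 < k,
    w ⟨i, by omega⟩ = w ⟨i + 1, by omega⟩ ∧ w ⟨i + 1, by omega⟩ = w ⟨k, hk⟩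

namespace List

variable {α : Type*}

def Avoids11_1 (l : List α) : Prop := ∀ u a v, l = u ++ a :: a :: v → a ∉ v

def Avoids1_11 (l : List α) : Prop := ∀ u a v, l = u ++ a :: a :: v → a ∉ u

theorem avoids11_1_cons_iff {a : α} {l : List α} :
    Avoids11_1 (a :: l) ↔ (l.head? = some a → a ∉ l.tail) ∧ Avoids11_1 l := by
  constructor
  · intro h
    refine ⟨fun hl => ?_, fun u b v huv => h (a :: u) b v (by rw [huv, cons_append])⟩
    cases l with
    | nil => simp at hl
    | cons b t => obtain rfl := Option.some.inj hl; exact h [] b t rfl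
  · rintro ⟨hhead, htail⟩ (_ | ⟨c, u⟩) b v huv
    · obtain ⟨rfl, rfl⟩ := cons.inj huv
      exact hhead rfl
    · exact htail u b v (cons.inj huv).2

theorem avoids11_1_reverse_iff {l : List α} : Avoids11_1 l.reverse ↔ Avoids1_11 l := by
  constructor
  · intro h u a v hl hu
    exact h v.reverse a u.reverse (by simp [hl]) (mem_reverse.2 hu)
  · intro h u a v hl hv
    exact h v.reverse a u.reverse (by simpa using congrArg reverse hl) (mem_reverse.2 hv)

theorem exists_eq_append_cons_cons_iff {l : List α} {P : List α → α → List α → Prop} :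
    (∃ u a v, l = u ++ a :: a :: v ∧ P u a v) ↔
      ∃ j, ∃ h : j + 1 < l.length, l[j] = l[j + 1] ∧ P (l.take j) l[j] (l.drop (j + 2)) := by
  constructor
  · rintro ⟨u, a, v, rfl, h⟩
    refine ⟨u.length, by simp, by simp, ?_⟩
    simpa using h
  · rintro ⟨j, hj, heq, h⟩
    refine ⟨l.take j, l[j], l.drop (j + 2), ?_, h⟩
    conv_lhs => rw [← take_append_drop j l, drop_eq_getElem_cons (by omega),
      drop_eq_getElem_cons hj, ← heq]

variable [DecidableEq α]

theorem destutter_ne_cons (a : α) (l : List α) :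
    (a :: l).destutter (· ≠ ·) =
      if l.head? = some a then l.destutter (· ≠ ·) else a :: l.destutter (· ≠ ·) := by
  cases l with
  | nil => simp
  | cons b t =>
    rw [destutter_cons_cons]
    by_cases hab : a = b
    · subst hab; simp [destutter_cons']
    · simp [hab, Ne.symm hab, destutter_cons']

theorem destutter_ne_append_singleton (l : List α) (a : α) :
    (l ++ [a]).destutter (· ≠ ·) =
      if l.getLast? = some a then l.destutter (· ≠ ·) else l.destutter (· ≠ ·) ++ [a] := by
  induction l with
  | nil => simp
  | cons b t ih =>
    cases t with
    | nil => by_cases h : a = b <;> simp [h, eq_comm]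
    | cons c s =>
      rw [cons_append, destutter_ne_cons, ih, getLast?_cons_cons, destutter_ne_cons b (c :: s)]
      simp only [cons_append, head?_cons, Option.some.injEq]
      split_ifs <;> simp

theorem destutter_ne_reverse (l : List α) :
    l.reverse.destutter (· ≠ ·) = (l.destutter (· ≠ ·)).reverse := by
  induction l with
  | nil => rfl
  | cons a t ih =>
    rw [reverse_cons, destutter_ne_append_singleton, destutter_ne_cons, getLast?_reverse, ih]
    split_ifs <;> simp

@[simp] theorem mem_destutter_ne {x : α} {l : List α} :
    x ∈ l.destutter (· ≠ ·) ↔ x ∈ l := by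
  induction l with
  | nil => simp
  | cons a t ih =>
    rw [destutter_ne_cons]
    split_ifs with h
    · rw [ih, mem_cons, or_iff_right_of_imp]
      rintro rfl
      exact mem_of_mem_head? h
    · rw [mem_cons, mem_cons, ih]

theorem head?_destutter_ne (l : List α) : (l.destutter (· ≠ ·)).head? = l.head? := by
  induction l with
  | nil => rfl
  | cons a t ih =>
    rw [destutter_ne_cons]
    split_ifs with h
    · rw [ih, h, head?_cons]
    · rfl

theorem getLast?_destutter_ne (l : List α) :
    (l.destutter (· ≠ ·)).getLast? = l.getLast? := by
  rw [← head?_reverse, ← destutter_ne_reverse, head?_destutter_ne, head?_reverse]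

theorem IsChain.destutter_ne {R : α → α → Prop} {l : List α} (h : l.IsChain R) :
    (l.destutter (· ≠ ·)).IsChain R := by
  induction l with
  | nil => simp
  | cons a t ih =>
    rw [destutter_ne_cons]
    split_ifs with hat
    · exact ih h.tail
    · refine (ih h.tail).cons fun b hb => h.rel_head? ?_
      rwa [head?_destutter_ne] at hb

def doubledLetters (l : List α) : Finset α := l.toFinset.filter fun a => [a, a] <:+: l

@[simp] theorem mem_doubledLetters {a : α} {l : List α} :
    a ∈ doubledLetters l ↔ [a, a] <:+: l := by
  simp only [doubledLetters, Finset.mem_filter, mem_toFinset, and_iff_right_iff_imp]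
  exact fun h => h.subset mem_cons_self

theorem doubledLetters_subset_toFinset (l : List α) : doubledLetters l ⊆ l.toFinset :=
  Finset.filter_subset _ _

theorem doubledLetters_cons (a : α) (l : List α) :
    doubledLetters (a :: l) =
      if l.head? = some a then insert a (doubledLetters l) else doubledLetters l := by
  ext x
  cases l with
  | nil => simp [infix_cons_iff]
  | cons b t => by_cases hab : b = a <;> grind [infix_cons_iff, mem_doubledLetters]

theorem doubledLetters_reverse (l : List α) : doubledLetters l.reverse = doubledLetters l := by
  ext a
  rw [mem_doubledLetters, mem_doubledLetters, ← reverse_infix, reverse_reverse]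
  rfl

def doubleLast (D : Finset α) : List α → List α
  | [] => []
  | a :: t => if a ∈ D ∧ a ∉ t then a :: a :: doubleLast D t else a :: doubleLast D t

variable {D : Finset α}

@[simp] theorem mem_doubleLast {x : α} {l : List α} : x ∈ doubleLast D l ↔ x ∈ l := by
  induction l with
  | nil => rfl
  | cons a t ih => rw [doubleLast]; split_ifs <;> simp [ih]

theorem head?_doubleLast (l : List α) : (doubleLast D l).head? = l.head? := by
  cases l with
  | nil => rfl
  | cons a t => rw [doubleLast]; split_ifs <;> rfl

theorem getLast?_doubleLast (l : List α) : (doubleLast D l).getLast? = l.getLast? := by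
  induction l with
  | nil => rfl
  | cons a t ih =>
    rw [doubleLast]
    split_ifs <;> simp [getLast?_cons, ih]

theorem IsChain.head?_doubleLast_ne {a : α} {l : List α} (h : (a :: l).IsChain (· ≠ ·)) :
    (doubleLast D l).head? ≠ some a := by
  rw [head?_doubleLast]
  exact fun hl => h.rel_head? hl rfl

theorem IsChain.doubleLast {R : α → α → Prop} (hR : ∀ a, R a a) {l : List α}
    (h : l.IsChain R) : (doubleLast D l).IsChain R := by
  induction l with
  | nil => exact .nil
  | cons a t ih =>
    have hhead : ∀ b ∈ (List.doubleLast D t).head?, R a b := by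
      rw [head?_doubleLast]; exact h.rel_head?
    rw [List.doubleLast]
    split_ifs
    · exact ((ih h.tail).cons hhead).cons_cons (hR a)
    · exact (ih h.tail).cons hhead

theorem length_doubleLast (l : List α) :
    (doubleLast D l).length = l.length + (l.toFinset ∩ D).card := by
  induction l with
  | nil => rfl
  | cons a t ih =>
    rw [doubleLast]
    split_ifs with h
    · rw [toFinset_cons, Finset.insert_inter_of_mem h.1,
        Finset.card_insert_of_notMem (by simp [h.2])]
      simp [ih]; omega
    · rw [toFinset_cons]
      by_cases hat : a ∈ t
      · rw [Finset.insert_eq_of_mem (mem_toFinset.2 hat)]; simp [ih]; omega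
      · rw [Finset.insert_inter_of_notMem (by tauto)]; simp [ih]; omega

theorem doubleLast_insert_of_notMem {a : α} {l : List α} (ha : a ∉ l) :
    doubleLast (insert a D) l = doubleLast D l := by
  induction l with
  | nil => rfl
  | cons b t ih =>
    have hba : b ≠ a := fun h => ha (h ▸ mem_cons_self)
    simp only [doubleLast, Finset.mem_insert, hba, false_or, ih (fun h => ha (mem_cons_of_mem b h))]

theorem destutter_ne_doubleLast {l : List α} (h : l.IsChain (· ≠ ·)) :
    (doubleLast D l).destutter (· ≠ ·) = l := by
  induction l with
  | nil => rfl
  | cons a t ih =>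
    have hhead := h.head?_doubleLast_ne (D := D)
    rw [doubleLast]
    split_ifs
    · rw [destutter_ne_cons, if_pos head?_cons, destutter_ne_cons, if_neg hhead, ih h.tail]
    · rw [destutter_ne_cons, if_neg hhead, ih h.tail]

theorem doubledLetters_doubleLast {l : List α} (h : l.IsChain (· ≠ ·)) :
    doubledLetters (doubleLast D l) = l.toFinset ∩ D := by
  induction l with
  | nil => rfl
  | cons a t ih =>
    have hhead := h.head?_doubleLast_ne (D := D)
    rw [doubleLast, toFinset_cons]
    split_ifs with had
    · rw [doubledLetters_cons, if_pos head?_cons, doubledLetters_cons, if_neg hhead, ih h.tail,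
        Finset.insert_inter_of_mem had.1]
    · rw [doubledLetters_cons, if_neg hhead, ih h.tail]
      by_cases hat : a ∈ t
      · rw [Finset.insert_eq_of_mem (mem_toFinset.2 hat)]
      · rw [Finset.insert_inter_of_notMem (by tauto)]

theorem avoids11_1_doubleLast {l : List α} (h : l.IsChain (· ≠ ·)) :
    Avoids11_1 (doubleLast D l) := by
  induction l with
  | nil => intro u a v huv; simp [doubleLast] at huv
  | cons a t ih =>
    have hhead := h.head?_doubleLast_ne (D := D)
    rw [doubleLast]
    split_ifs with had
    · simp only [avoids11_1_cons_iff, head?_cons, tail_cons, mem_doubleLast]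
      exact ⟨fun _ => by simpa using had.2, fun h' => absurd h' hhead, ih h.tail⟩
    · exact avoids11_1_cons_iff.2 ⟨fun h' => absurd h' hhead, ih h.tail⟩

def moveSquaresLast (l : List α) : List α :=
  doubleLast (doubledLetters l) (l.destutter (· ≠ ·))

-- Reversal exchanges first and last occurrences, and the patterns 11-1 and 1-11.
def moveSquaresFirst (l : List α) : List α := (moveSquaresLast l.reverse).reverse

theorem moveSquaresLast_eq_self {l : List α} (h : Avoids11_1 l) : moveSquaresLast l = l := by
  induction l with
  | nil => rfl
  | cons a m ih =>
    obtain ⟨hsq, hm⟩ := avoids11_1_cons_iff.1 h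
    have ih := ih hm
    unfold moveSquaresLast at ih ⊢
    rw [destutter_ne_cons, doubledLetters_cons]
    by_cases ha : m.head? = some a
    · obtain ⟨m', rfl⟩ : ∃ m', m = a :: m' := ⟨m.tail, by cases m <;> simp_all⟩
      -- the square `a a` is the last occurrence of `a`
      have ham' : a ∉ m' := hsq ha
      have hhead' : m'.head? ≠ some a := fun h' => ham' (mem_of_mem_head? h')
      have had : a ∉ doubledLetters m' := fun h' =>
        ham' (mem_toFinset.1 (doubledLetters_subset_toFinset m' h'))
      have ham'' : a ∉ m'.destutter (· ≠ ·) := by simpa using ham'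
      rw [if_pos ha, if_pos ha]
      rw [destutter_ne_cons, if_neg hhead', doubledLetters_cons, if_neg hhead'] at ih ⊢
      rw [doubleLast, if_neg (fun h' => had h'.1), cons.injEq] at ih
      rw [doubleLast, if_pos ⟨Finset.mem_insert_self a _, ham''⟩,
        doubleLast_insert_of_notMem ham'', ih.2]
    · rw [if_neg ha, if_neg ha, doubleLast, if_neg, ih]
      rintro ⟨had, hnot⟩
      exact hnot (mem_destutter_ne.2 (mem_toFinset.1 (doubledLetters_subset_toFinset m had)))

@[simp] theorem mem_moveSquaresLast {x : α} {l : List α} :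
    x ∈ moveSquaresLast l ↔ x ∈ l := by
  simp [moveSquaresLast]

theorem head?_moveSquaresLast (l : List α) : (moveSquaresLast l).head? = l.head? := by
  rw [moveSquaresLast, head?_doubleLast, head?_destutter_ne]

theorem getLast?_moveSquaresLast (l : List α) :
    (moveSquaresLast l).getLast? = l.getLast? := by
  rw [moveSquaresLast, getLast?_doubleLast, getLast?_destutter_ne]

theorem IsChain.moveSquaresLast {R : α → α → Prop} (hR : ∀ a, R a a) {l : List α}
    (h : l.IsChain R) : (moveSquaresLast l).IsChain R :=
  h.destutter_ne.doubleLast hR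

theorem avoids11_1_moveSquaresLast (l : List α) : Avoids11_1 (moveSquaresLast l) :=
  avoids11_1_doubleLast (isChain_destutter _ l)

theorem moveSquaresLast_reverse (l : List α) :
    moveSquaresLast l.reverse =
      doubleLast (doubledLetters l) (l.destutter (· ≠ ·)).reverse := by
  rw [moveSquaresLast, destutter_ne_reverse, doubledLetters_reverse]

/-- `moveSquaresLast l` has the same reduced word and the same squared letters as `l`. -/
theorem moveSquaresLast_reverse_moveSquaresLast (l : List α) :
    moveSquaresLast (moveSquaresLast l).reverse = moveSquaresLast l.reverse := by
  have hsub : doubledLetters l ⊆ (l.destutter (· ≠ ·)).toFinset := fun a ha => by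
    simpa using doubledLetters_subset_toFinset l ha
  rw [moveSquaresLast_reverse, moveSquaresLast_reverse, moveSquaresLast,
    destutter_ne_doubleLast (isChain_destutter _ l),
    doubledLetters_doubleLast (isChain_destutter _ l), Finset.inter_eq_right.2 hsub]

theorem length_moveSquaresLast_reverse (l : List α) :
    (moveSquaresLast l.reverse).length = (moveSquaresLast l).length := by
  rw [moveSquaresLast_reverse, moveSquaresLast, length_doubleLast, length_doubleLast,
    length_reverse, toFinset_reverse]

@[simp] theorem mem_moveSquaresFirst {x : α} {l : List α} :
    x ∈ moveSquaresFirst l ↔ x ∈ l := by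
  simp [moveSquaresFirst]

theorem head?_moveSquaresFirst (l : List α) : (moveSquaresFirst l).head? = l.head? := by
  rw [moveSquaresFirst, head?_reverse, getLast?_moveSquaresLast, getLast?_reverse]

theorem getLast?_moveSquaresFirst (l : List α) :
    (moveSquaresFirst l).getLast? = l.getLast? := by
  rw [moveSquaresFirst, getLast?_reverse, head?_moveSquaresLast, head?_reverse]

theorem IsChain.moveSquaresFirst {R : α → α → Prop} (hR : ∀ a, R a a) {l : List α}
    (h : l.IsChain R) : (moveSquaresFirst l).IsChain R :=
  isChain_reverse.2 (IsChain.moveSquaresLast (R := fun a b => R b a) hR (isChain_reverse.2 h))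

theorem avoids1_11_moveSquaresFirst (l : List α) : Avoids1_11 (moveSquaresFirst l) :=
  avoids11_1_reverse_iff.1 (by
    rw [moveSquaresFirst, reverse_reverse]; exact avoids11_1_moveSquaresLast _)

theorem moveSquaresLast_moveSquaresFirst {l : List α} (h : Avoids11_1 l) :
    moveSquaresLast (moveSquaresFirst l) = l := by
  rw [moveSquaresFirst, moveSquaresLast_reverse_moveSquaresLast, reverse_reverse,
    moveSquaresLast_eq_self h]

theorem moveSquaresFirst_moveSquaresLast {l : List α} (h : Avoids1_11 l) :
    moveSquaresFirst (moveSquaresLast l) = l := by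
  rw [moveSquaresFirst, moveSquaresLast_reverse_moveSquaresLast,
    moveSquaresLast_eq_self (avoids11_1_reverse_iff.2 h), reverse_reverse]

theorem length_moveSquaresFirst {l : List α} (h : Avoids11_1 l) :
    (moveSquaresFirst l).length = l.length := by
  rw [moveSquaresFirst, length_reverse, length_moveSquaresLast_reverse, moveSquaresLast_eq_self h]

theorem length_moveSquaresLast {l : List α} (h : Avoids1_11 l) :
    (moveSquaresLast l).length = l.length := by
  rw [← length_moveSquaresLast_reverse, moveSquaresLast_eq_self (avoids11_1_reverse_iff.2 h),
    length_reverse]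

theorem ncard_avoids11_1_eq_ncard_avoids1_11 (n : ℕ) (P : List α → Prop)
    (hfirst : ∀ l, P l → P (moveSquaresFirst l))
    (hlast : ∀ l, P l → P (moveSquaresLast l)) :
    {l | l.length = n ∧ Avoids11_1 l ∧ P l}.ncard =
      {l | l.length = n ∧ Avoids1_11 l ∧ P l}.ncard := by
  refine Set.BijOn.ncard_eq (f := moveSquaresFirst)
    (Set.InvOn.bijOn (f' := moveSquaresLast) ?_ ?_ ?_)
  · exact ⟨fun l hl => moveSquaresLast_moveSquaresFirst hl.2.1,
      fun l hl => moveSquaresFirst_moveSquaresLast hl.2.1⟩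
  · rintro l ⟨rfl, hl, hP⟩
    exact ⟨length_moveSquaresFirst hl, avoids1_11_moveSquaresFirst l, hfirst l hP⟩
  · rintro l ⟨rfl, hl, hP⟩
    exact ⟨length_moveSquaresLast hl, avoids11_1_moveSquaresLast l, hlast l hP⟩

end List

def IsCatalanList (l : List ℕ) : Prop :=
  (∀ x ∈ l, 1 ≤ x) ∧ (∀ x ∈ l.head?, x = 1) ∧ l.IsChain (fun a b => b ≤ a + 1)

theorem isCatalanWord_iff_isCatalanList_ofFn {n : ℕ} {w : Fin n → ℕ} :
    IsCatalanWord w ↔ IsCatalanList (List.ofFn w) := by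
  rw [IsCatalanWord, IsCatalanList, List.forall_mem_ofFn_iff, List.isChain_ofFn]
  refine and_congr_right' (and_congr_left' ?_)
  cases n <;> simp [List.ofFn_succ]

theorem List.getLast?_ofFn {α : Type*} {n : ℕ} (f : Fin n → α) (hn : 0 < n) :
    (ofFn f).getLast? = some (f ⟨n - 1, by omega⟩) := by
  simp [getLast?_eq_getElem?, hn]

theorem ncard_setOf_ofFn {α : Type*} (n : ℕ) (P : List α → Prop) :
    {w : Fin n → α | P (List.ofFn w)}.ncard = {l : List α | l.length = n ∧ P l}.ncard := by
  rw [← Set.ncard_image_of_injective _ List.ofFn_injective]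
  congr 1
  ext l
  constructor
  · rintro ⟨w, hw, rfl⟩
    exact ⟨List.length_ofFn, hw⟩
  · rintro ⟨rfl, hl⟩
    exact ⟨fun i => l[i], by simpa using hl, List.ofFn_getElem⟩

open List in
theorem contains11_1_iff {n : ℕ} (w : Fin n → ℕ) :
    Contains11_1 w ↔ ∃ u a v, List.ofFn w = u ++ a :: a :: v ∧ a ∈ v := by
  simp only [exists_eq_append_cons_cons_iff, mem_drop_iff_getElem, List.getElem_ofFn, length_ofFn]
  constructor
  · rintro ⟨i, k, hk, hik, h1, h2⟩
    exact ⟨i, by omega, h1, k - (i + 2), by omega, by rw [h1, h2]; congr; omega⟩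
  · rintro ⟨j, hj, h1, k, hk, h2⟩
    exact ⟨j, j + 2 + k, hk.trans_eq' (by omega), by omega, h1, by rw [← h1, ← h2]⟩

open List in
theorem contains1_11_iff {n : ℕ} (w : Fin n → ℕ) :
    Contains1_11 w ↔ ∃ u a v, List.ofFn w = u ++ a :: a :: v ∧ a ∈ u := by
  simp only [exists_eq_append_cons_cons_iff, mem_take_iff_getElem, List.getElem_ofFn, length_ofFn]
  constructor
  · rintro ⟨i, j, hj, hij, h1, h2⟩
    exact ⟨j, hj, h2, i, by omega, h1⟩
  · rintro ⟨j, hj, h1, i, hi, h2⟩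
    exact ⟨i, j, hj, by omega, h2, h1⟩

theorem not_contains11_1_iff {n : ℕ} {w : Fin n → ℕ} :
    ¬Contains11_1 w ↔ List.Avoids11_1 (List.ofFn w) := by
  simp only [contains11_1_iff, List.Avoids11_1, not_exists, not_and]

theorem not_contains1_11_iff {n : ℕ} {w : Fin n → ℕ} :
    ¬Contains1_11 w ↔ List.Avoids1_11 (List.ofFn w) := by
  simp only [contains1_11_iff, List.Avoids1_11, not_exists, not_and]

theorem IsCatalanList.moveSquaresFirst {l : List ℕ} (h : IsCatalanList l) :
    IsCatalanList l.moveSquaresFirst := by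
  obtain ⟨hpos, hhead, hchain⟩ := h
  refine ⟨fun x hx => hpos x (List.mem_moveSquaresFirst.1 hx), ?_,
    hchain.moveSquaresFirst (by omega)⟩
  rwa [List.head?_moveSquaresFirst]

theorem IsCatalanList.moveSquaresLast {l : List ℕ} (h : IsCatalanList l) :
    IsCatalanList l.moveSquaresLast := by
  obtain ⟨hpos, hhead, hchain⟩ := h
  refine ⟨fun x hx => hpos x (List.mem_moveSquaresLast.1 hx), ?_,
    hchain.moveSquaresLast (by omega)⟩
  rwa [List.head?_moveSquaresLast]

theorem ncard_catalan_not_contains11_1_eq (n : ℕ) (Q : List ℕ → Prop)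
    (hQ : ∀ l₁ l₂ : List ℕ, (∀ x, x ∈ l₁ ↔ x ∈ l₂) → l₁.getLast? = l₂.getLast? →
      Q l₁ → Q l₂) :
    {w : Fin n → ℕ | IsCatalanWord w ∧ ¬Contains11_1 w ∧ Q (List.ofFn w)}.ncard =
      {w : Fin n → ℕ | IsCatalanWord w ∧ ¬Contains1_11 w ∧ Q (List.ofFn w)}.ncard := by
  have key := List.ncard_avoids11_1_eq_ncard_avoids1_11 n (fun l => IsCatalanList l ∧ Q l)
    (fun l ⟨hc, hq⟩ => ⟨hc.moveSquaresFirst,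
      hQ _ _ (fun _ => List.mem_moveSquaresFirst.symm) l.getLast?_moveSquaresFirst.symm hq⟩)
    (fun l ⟨hc, hq⟩ => ⟨hc.moveSquaresLast,
      hQ _ _ (fun _ => List.mem_moveSquaresLast.symm) l.getLast?_moveSquaresLast.symm hq⟩)
  rw [← ncard_setOf_ofFn, ← ncard_setOf_ofFn] at key
  simpa only [isCatalanWord_iff_isCatalanList_ofFn, not_contains11_1_iff, not_contains1_11_iff,
    and_left_comm] using key

theorem catalan_avoid_11_1_eq_avoid_1_11 (n : ℕ) (hn : 1 ≤ n) :
    Set.ncard {w : Fin n → ℕ | IsCatalanWord w ∧ ¬ Contains11_1 w} =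
      Set.ncard {w : Fin n → ℕ | IsCatalanWord w ∧ ¬ Contains1_11 w} ∧
    (∀ m : ℕ, 1 ≤ m →
      Set.ncard {w : Fin n → ℕ | IsCatalanWord w ∧ ¬ Contains11_1 w ∧
          (∀ i, w i ≤ m) ∧ (∃ i, w i = m)} =
      Set.ncard {w : Fin n → ℕ | IsCatalanWord w ∧ ¬ Contains1_11 w ∧
          (∀ i, w i ≤ m) ∧ (∃ i, w i = m)}) ∧
    (∀ a : ℕ, 1 ≤ a →
      Set.ncard {w : Fin n → ℕ | IsCatalanWord w ∧ ¬ Contains11_1 w ∧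
          w ⟨n - 1, by omega⟩ = a} =
      Set.ncard {w : Fin n → ℕ | IsCatalanWord w ∧ ¬ Contains1_11 w ∧
          w ⟨n - 1, by omega⟩ = a}) := by
  refine ⟨?_, fun m _ => ?_, fun a _ => ?_⟩
  · simpa using ncard_catalan_not_contains11_1_eq n (fun _ => True) (fun _ _ _ _ => id)
  · simpa [List.forall_mem_ofFn_iff] using
      ncard_catalan_not_contains11_1_eq n (fun l => (∀ x ∈ l, x ≤ m) ∧ m ∈ l)
        fun l₁ l₂ hmem _ ⟨hle, hm⟩ => ⟨fun x hx => hle x ((hmem x).2 hx), (hmem m).1 hm⟩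
  · simpa [List.getLast?_ofFn _ hn] using
      ncard_catalan_not_contains11_1_eq n (fun l => l.getLast? = some a)
        fun _ _ _ hlast h => hlast ▸ h
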